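/- Let φ be the standard Gaussian cdf. For any fixed ε with 0 < ε < 1, φ(√(2 log M)·ε)^M → 0 as M → ∞. -/

import Mathlib

/-!
Since `p ≤ exp (-(1 - p))`, we have `φ(x)^M ≤ exp (-M (1 - φ(x)))`, so it suffices that
`M (1 - φ(x_M)) → ∞` for `x_M = ε √(2 log M)`. Bounding the tail below by the density at `x_M + 1`
gives `M (1 - φ(x_M)) ≥ c · exp ((1 - ε²) log M - ε √(2 log M) - 1/2)`, which tends to infinity
because `ε² < 1`.
-/

open Real Filter MeasureTheory ProbabilityTheory

/-- The standard Gaussian cumulative distribution function. -/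
noncomputable def stdGaussCdf (x : ℝ) : ℝ :=
  (ProbabilityTheory.cdf (ProbabilityTheory.gaussianReal 0 1)) x

/-- The density is decreasing on `[0, ∞)`, so on `(x, x + 1]` it is at least its value at `x + 1`. -/
lemma gaussianPDFReal_add_one_le_one_sub_stdGaussCdf {x : ℝ} (hx : 0 ≤ x) :
    gaussianPDFReal 0 1 (x + 1) ≤ 1 - stdGaussCdf x := by
  have hpdf : ∀ t ∈ Set.Ioc x (x + 1), gaussianPDFReal 0 1 (x + 1) ≤ gaussianPDFReal 0 1 t := by
    rintro t ⟨hxt, htx⟩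
    simp only [gaussianPDFReal]
    gcongr
    nlinarith
  calc gaussianPDFReal 0 1 (x + 1)
      = gaussianPDFReal 0 1 (x + 1) * volume.real (Set.Ioc x (x + 1)) := by simp
    _ ≤ ∫ t in Set.Ioc x (x + 1), gaussianPDFReal 0 1 t :=
        setIntegral_ge_of_const_le_real measurableSet_Ioc (by simp) hpdf
          (integrable_gaussianPDFReal 0 1).integrableOn
    _ = (gaussianReal 0 1).real (Set.Ioc x (x + 1)) := by
        rw [measureReal_def, gaussianReal_apply_eq_integral 0 one_ne_zero,
          ENNReal.toReal_ofReal
            (setIntegral_nonneg measurableSet_Ioc fun t _ ↦ gaussianPDFReal_nonneg 0 1 t)]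
    _ ≤ (gaussianReal 0 1).real (Set.Ioi x) := measureReal_mono Set.Ioc_subset_Ioi_self
    _ = 1 - stdGaussCdf x := by
        rw [stdGaussCdf, cdf_eq_real, ← Set.compl_Iic,
          probReal_compl_eq_one_sub measurableSet_Iic]

lemma tendsto_pow_nhds_zero_of_tendsto_mul_one_sub {p : ℕ → ℝ} (hp : ∀ n, 0 ≤ p n)
    (h : Tendsto (fun n : ℕ ↦ n * (1 - p n)) atTop atTop) :
    Tendsto (fun n ↦ p n ^ n) atTop (nhds 0) := by
  have hle : ∀ n : ℕ, p n ^ n ≤ exp (-(n * (1 - p n))) := fun n ↦ by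
    calc p n ^ n ≤ exp (-(1 - p n)) ^ n := by
          gcongr
          · exact hp n
          · linarith [one_sub_le_exp_neg (1 - p n)]
      _ = exp (-(n * (1 - p n))) := by rw [← exp_nat_mul]; ring_nf
  exact squeeze_zero (fun n ↦ pow_nonneg (hp n) n) hle
    (tendsto_exp_atBot.comp (tendsto_neg_atTop_atBot.comp h))

lemma tendsto_exp_mul_gaussianPDFReal_sqrt_mul_add_one {ε : ℝ} (hε : |ε| < 1) :
    Tendsto (fun L : ℝ ↦ exp L * gaussianPDFReal 0 1 (√(2 * L) * ε + 1)) atTop atTop := by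
  set δ := 1 - ε ^ 2
  have hδ0 : 0 < δ := by nlinarith [abs_nonneg ε, sq_abs ε]
  have hexp : ∀ L ≥ 0, exp L * gaussianPDFReal 0 1 (√(2 * L) * ε + 1)
      = (√(2 * π))⁻¹ * exp (δ * L - ε * √(2 * L) - 1 / 2) := by
    intro L hL
    have hs : √(2 * L) ^ 2 = 2 * L := sq_sqrt (by linarith)
    simp only [gaussianPDFReal, NNReal.coe_one, mul_one, sub_zero]
    rw [mul_left_comm, ← exp_add]
    congr 2
    linear_combination (-ε ^ 2 / 2) * hs
  -- AM-GM: `ε s ≤ δ s² / 4 + ε² / δ`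
  have hamgm : ∀ s : ℝ, ε * s ≤ δ * s ^ 2 / 4 + ε ^ 2 / δ := fun s ↦ by
    have : δ * s ^ 2 / 4 + ε ^ 2 / δ - ε * s = (δ * s - 2 * ε) ^ 2 / (4 * δ) := by
      field_simp
      ring
    linarith [show 0 ≤ (δ * s - 2 * ε) ^ 2 / (4 * δ) by positivity]
  refine tendsto_atTop_mono' atTop ?_ <| Tendsto.const_mul_atTop (by positivity : 0 < (√(2 * π))⁻¹)
    (tendsto_exp_atTop.comp (tendsto_atTop_add_const_right _ (-(ε ^ 2 / δ + 1 / 2))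
      (tendsto_id.const_mul_atTop (by positivity : 0 < δ / 2))))
  filter_upwards [eventually_ge_atTop 0] with L hL
  rw [hexp L hL, Function.comp_apply, id]
  gcongr
  nlinarith [hamgm (√(2 * L)), sq_sqrt (show 0 ≤ 2 * L by linarith)]

theorem stmt4 (ε : ℝ) (hε0 : 0 < ε) (hε1 : ε < 1) :
    Tendsto (fun M : ℕ => (stdGaussCdf (Real.sqrt (2 * Real.log M) * ε)) ^ M)
      atTop (nhds 0) := by
  refine tendsto_pow_nhds_zero_of_tendsto_mul_one_sub (fun M ↦ cdf_nonneg _ _) ?_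
  refine tendsto_atTop_mono' atTop ?_
    ((tendsto_exp_mul_gaussianPDFReal_sqrt_mul_add_one (abs_lt.mpr ⟨by linarith, hε1⟩)).comp
      (tendsto_log_atTop.comp tendsto_natCast_atTop_atTop))
  filter_upwards [eventually_ge_atTop 1] with M hM
  have hM0 : (0 : ℝ) < M := by exact_mod_cast hM
  rw [Function.comp_apply, Function.comp_apply, exp_log hM0]
  gcongr
  exact gaussianPDFReal_add_one_le_one_sub_stdGaussCdf (by positivity)
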